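/- arXiv:2306.16871 — 4 statements merged into one kernel-verified Lean document; each statement's English description precedes it below -/
import Mathlib

section
/- Let ψ₀ : [0,∞) → ℝ be continuously differentiable and suppose ∫₀ᵗ ψ₀(s) ds < 1 for all t ≥ 0. Define ψ(t,x) := ψ₀(t+x) / (1 − ∫₀ᵗ ψ₀(s) ds) for t, x ≥ 0. Then ψ(0,x) = ψ₀(x) and ψ satisfies the first-order partial differential equation ∂_t ψ(t,x) = ∂_x ψ(t,x) + ψ(t,x) ψ(t,0) for all t, x ≥ 0. -/
open MeasureTheory intervalIntegral Set

/-!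
Write `ψ(t,x) = ψ₀(t+x) / D(t)` with `D(t) = 1 - ∫₀ᵗ ψ₀`, which does not vanish. The numerator
depends on `t + x` only, so it has the same derivative `ψ₀'(t+x)` in `t` and in `x`, and by the
fundamental theorem of calculus `D' = -ψ₀`. The quotient rule then gives
`∂ₜψ = ψ₀'(t+x)/D(t) + ψ₀(t+x) ψ₀(t)/D(t)² = ∂ₓψ(t,x) + ψ(t,x) ψ(t,0)`.
-/

section Shift

variable {𝕜 F : Type*} [NontriviallyNormedField 𝕜] [NormedAddCommGroup F] [NormedSpace 𝕜 F]
  {f : 𝕜 → F} {f' : F} {s t : Set 𝕜} {a x : 𝕜}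

theorem HasDerivWithinAt.comp_const_add_of_mapsTo (hf : HasDerivWithinAt f f' s (a + x))
    (hst : MapsTo (a + ·) t s) : HasDerivWithinAt (fun y => f (a + y)) f' t x := by
  simpa [Function.comp_def] using hf.scomp x ((hasDerivWithinAt_id x t).const_add a) hst

theorem HasDerivWithinAt.comp_add_const_of_mapsTo (hf : HasDerivWithinAt f f' s (x + a))
    (hst : MapsTo (· + a) t s) : HasDerivWithinAt (fun y => f (y + a)) f' t x := by
  simpa [Function.comp_def] using hf.scomp x ((hasDerivWithinAt_id x t).add_const a) hst

end Shift

theorem hasDerivWithinAt_integral_Ici {E : Type*} [NormedAddCommGroup E] [NormedSpace ℝ E]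
    [CompleteSpace E] {f : ℝ → E} {a t : ℝ} (hf : ContinuousOn f (Ici a)) (ht : a ≤ t) :
    HasDerivWithinAt (fun s => ∫ u in a..s, f u) (f t) (Ici a) t := by
  -- The FTC is available on the compact interval `[a, t + 1]`, a neighbourhood of `t` in `[a, ∞)`.
  have : Fact (t ∈ Icc a (t + 1)) := ⟨⟨ht, by linarith⟩⟩
  have hIcc : ContinuousOn f (Icc a (t + 1)) := hf.mono Icc_subset_Ici_self
  have hint : IntervalIntegrable f volume a t :=
    (hIcc.mono (uIcc_of_le ht ▸ Icc_subset_Icc_right (by linarith))).intervalIntegrable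
  have hderiv := integral_hasDerivWithinAt_right hint (s := Icc a (t + 1))
    (hIcc.stronglyMeasurableAtFilter_nhdsWithin measurableSet_Icc t) (hIcc t this.out)
  rw [← Ici_inter_Iic] at hderiv
  exact (hasDerivWithinAt_inter (Iic_mem_nhds (by linarith))).1 hderiv

/-- The deterministic discount-curve PDE: with `ψ(t,x) = ψ₀(t+x)/(1−∫₀ᵗψ₀)`,
one has `ψ(0,·) = ψ₀` and `∂ₜψ = ∂ₓψ + ψ(t,x)ψ(t,0)` on `[0,∞)²`. -/
theorem discount_curve_pde_solution
    (ψ₀ : ℝ → ℝ) (hψ₀ : ContDiffOn ℝ 1 ψ₀ (Set.Ici 0))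
    (hlt : ∀ t ≥ (0:ℝ), (∫ s in (0:ℝ)..t, ψ₀ s) < 1)
    (ψ : ℝ → ℝ → ℝ)
    (hψ : ∀ t x, ψ t x = ψ₀ (t + x) / (1 - ∫ s in (0:ℝ)..t, ψ₀ s)) :
    (∀ x ≥ (0:ℝ), ψ 0 x = ψ₀ x) ∧
      ∀ t ≥ (0:ℝ), ∀ x ≥ (0:ℝ),
        ∃ a : ℝ, HasDerivWithinAt (fun y => ψ t y) a (Set.Ici 0) x ∧
          HasDerivWithinAt (fun s => ψ s x) (a + ψ t x * ψ t 0) (Set.Ici 0) t := by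
  set D : ℝ → ℝ := fun s => 1 - ∫ u in (0:ℝ)..s, ψ₀ u
  obtain rfl : ψ = fun t x => ψ₀ (t + x) / D t := funext₂ hψ
  refine ⟨fun x _ => by simp [D], fun t ht x hx => ?_⟩
  have hD : D t ≠ 0 := (sub_pos.2 (hlt t ht)).ne'
  have hDt : HasDerivWithinAt D (-ψ₀ t) (Ici 0) t := by
    simpa using (hasDerivWithinAt_integral_Ici hψ₀.continuousOn ht).const_sub 1
  have hψ₀' : HasDerivWithinAt ψ₀ (derivWithin ψ₀ (Ici 0) (t + x)) (Ici 0) (t + x) :=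
    ((hψ₀.differentiableOn one_ne_zero) _ (add_nonneg ht hx)).hasDerivWithinAt
  have hshift_x : MapsTo (t + ·) (Ici (0:ℝ)) (Ici 0) := fun y hy => add_nonneg ht hy
  have hshift_t : MapsTo (· + x) (Ici (0:ℝ)) (Ici 0) := fun s hs => add_nonneg hs hx
  refine ⟨_, (hψ₀'.comp_const_add_of_mapsTo hshift_x).div_const _,
    ((hψ₀'.comp_add_const_of_mapsTo hshift_t).div hDt hD).congr_deriv ?_⟩
  simp only [add_zero]
  field_simp
  ring
end

section
/- Let w : [0,∞) → (0,∞) be measurable and nondecreasing with ∫₀^∞ w(x)^{−1/3} dx < ∞, and let ψ : [0,∞) → ℝ be continuously differentiable with ψ(x) → 0 as x → ∞ and ∫₀^∞ ψ'(x)² w(x) dx < ∞. Then ∫₀^∞ |ψ(x)| dx ≤ (∫₀^∞ w(x)^{−1/3} dx)^{3/2} · (∫₀^∞ ψ'(x)² w(x) dx)^{1/2}. -/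
/-!
By the fundamental theorem of calculus `|ψ x| ≤ ∫ₓ^∞ |ψ'|`, and Cauchy–Schwarz against the weight
gives `|ψ x| ≤ (∫ₓ^∞ ψ'² w)^{1/2} (∫ₓ^∞ w⁻¹)^{1/2}`. Since `w` is nondecreasing,
`w t⁻¹ ≤ w x^{-2/3} w t^{-1/3}` for `t ≥ x`, so `|ψ x| ≤ (∫₀^∞ w^{-1/3})^{1/2} ‖ψ‖_w w x^{-1/3}`.
The exponent `1/3` is the one for which this pointwise bound is integrable by hypothesis;
integrating it over `x` gives the claim.
-/

open MeasureTheory Set Filter Topology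

section WeightedCauchySchwarz

variable {α : Type*} [MeasurableSpace α] {μ : Measure α}

theorem integral_mul_le_sqrt_mul_sqrt_of_nonneg {f g : α → ℝ} (hf_nonneg : 0 ≤ᵐ[μ] f)
    (hg_nonneg : 0 ≤ᵐ[μ] g) (hf : MemLp f 2 μ) (hg : MemLp g 2 μ) :
    ∫ x, f x * g x ∂μ ≤ √(∫ x, f x ^ 2 ∂μ) * √(∫ x, g x ^ 2 ∂μ) := by
  have h := integral_mul_le_Lp_mul_Lq_of_nonneg Real.HolderConjugate.two_two hf_nonneg hg_nonneg
    (by simpa using hf) (by simpa using hg)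
  simpa only [Real.rpow_two, ← Real.sqrt_eq_rpow] using h

theorem two_mul_abs_le_sq_mul_add_inv {a w : ℝ} (hw : 0 < w) : 2 * |a| ≤ a ^ 2 * w + w⁻¹ := by
  have h : a ^ 2 * w + w⁻¹ - 2 * |a| = (|a| * w - 1) ^ 2 / w := by
    field_simp
    rw [← sq_abs a]
    ring
  rw [← sub_nonneg, h]
  positivity

theorem integrable_of_integrable_sq_mul_of_integrable_inv {f w : α → ℝ}
    (hf : AEStronglyMeasurable f μ) (hw_pos : ∀ᵐ x ∂μ, 0 < w x)
    (hfw : Integrable (fun x => f x ^ 2 * w x) μ) (hw_inv : Integrable (fun x => (w x)⁻¹) μ) :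
    Integrable f μ := by
  refine ((hfw.add hw_inv).div_const 2).mono' hf ?_
  filter_upwards [hw_pos] with x hx
  rw [Real.norm_eq_abs, Pi.add_apply]
  linarith [two_mul_abs_le_sq_mul_add_inv (a := f x) hx]

theorem integral_abs_le_sqrt_mul_sqrt_of_weight {f w : α → ℝ} (hf : AEStronglyMeasurable f μ)
    (hw : AEMeasurable w μ) (hw_pos : ∀ᵐ x ∂μ, 0 < w x)
    (hfw : Integrable (fun x => f x ^ 2 * w x) μ) (hw_inv : Integrable (fun x => (w x)⁻¹) μ) :
    ∫ x, |f x| ∂μ ≤ √(∫ x, f x ^ 2 * w x ∂μ) * √(∫ x, (w x)⁻¹ ∂μ) := by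
  have hsqrt : AEMeasurable (fun x => √(w x)) μ := hw.sqrt
  have hF_sq : (fun x => (|f x| * √(w x)) ^ 2) =ᵐ[μ] fun x => f x ^ 2 * w x := by
    filter_upwards [hw_pos] with x hx
    rw [mul_pow, sq_abs, Real.sq_sqrt hx.le]
  have hG_sq : (fun x => (√(w x))⁻¹ ^ 2) =ᵐ[μ] fun x => (w x)⁻¹ := by
    filter_upwards [hw_pos] with x hx
    rw [inv_pow, Real.sq_sqrt hx.le]
  have hFG : (fun x => |f x| * √(w x) * (√(w x))⁻¹) =ᵐ[μ] fun x => |f x| := by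
    filter_upwards [hw_pos] with x hx
    rw [mul_assoc, mul_inv_cancel₀ (Real.sqrt_pos.mpr hx).ne', mul_one]
  have hF : MemLp (fun x => |f x| * √(w x)) 2 μ :=
    (memLp_two_iff_integrable_sq (hf.norm.mul hsqrt.aestronglyMeasurable)).mpr
      (hfw.congr hF_sq.symm)
  have hG : MemLp (fun x => (√(w x))⁻¹) 2 μ :=
    (memLp_two_iff_integrable_sq hsqrt.inv.aestronglyMeasurable).mpr (hw_inv.congr hG_sq.symm)
  have h := integral_mul_le_sqrt_mul_sqrt_of_nonneg (Eventually.of_forall fun x => by positivity)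
    (Eventually.of_forall fun x => by positivity) hF hG
  rwa [integral_congr_ae hFG, integral_congr_ae hF_sq, integral_congr_ae hG_sq] at h

end WeightedCauchySchwarz

theorem inv_le_rpow_sub_one_mul_rpow_neg {a b p : ℝ} (ha : 0 < a) (hab : a ≤ b) (hp : p ≤ 1) :
    b⁻¹ ≤ a ^ (p - 1) * b ^ (-p) := by
  have hb := ha.trans_le hab
  calc b⁻¹ = b ^ (p - 1) * b ^ (-p) := by
        rw [← Real.rpow_add hb, show p - 1 + -p = -1 by ring, Real.rpow_neg_one]
    _ ≤ a ^ (p - 1) * b ^ (-p) := mul_le_mul_of_nonneg_right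
        (Real.rpow_le_rpow_of_nonpos ha hab (by linarith)) (by positivity)

section MonotoneWeight

variable {w : ℝ → ℝ} {a p : ℝ}

theorem integrableOn_inv_of_monotoneOn (hp : p ≤ 1) (hw_meas : Measurable w) (ha : 0 < w a)
    (hw_mono : MonotoneOn w (Ici a)) (hw_int : IntegrableOn (fun x => w x ^ (-p)) (Ioi a)) :
    IntegrableOn (fun x => (w x)⁻¹) (Ioi a) := by
  refine (hw_int.const_mul (w a ^ (p - 1))).mono' hw_meas.inv.aestronglyMeasurable ?_
  filter_upwards [ae_restrict_mem measurableSet_Ioi] with x hx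
  have hle : w a ≤ w x := hw_mono self_mem_Ici (mem_Ici.2 hx.out.le) hx.out.le
  rw [Real.norm_of_nonneg (inv_nonneg.2 (ha.trans_le hle).le)]
  exact inv_le_rpow_sub_one_mul_rpow_neg ha hle hp

theorem setIntegral_inv_le_of_monotoneOn (hp : p ≤ 1) (hw_meas : Measurable w) (ha : 0 < w a)
    (hw_mono : MonotoneOn w (Ici a)) (hw_int : IntegrableOn (fun x => w x ^ (-p)) (Ioi a)) :
    ∫ x in Ioi a, (w x)⁻¹ ≤ w a ^ (p - 1) * ∫ x in Ioi a, w x ^ (-p) := by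
  rw [← integral_const_mul]
  exact setIntegral_mono_on (integrableOn_inv_of_monotoneOn hp hw_meas ha hw_mono hw_int)
    (hw_int.const_mul _) measurableSet_Ioi fun x hx =>
      inv_le_rpow_sub_one_mul_rpow_neg ha (hw_mono self_mem_Ici (mem_Ici.2 hx.out.le) hx.out.le) hp

end MonotoneWeight

theorem abs_le_setIntegral_abs_deriv_Ioi {f f' : ℝ → ℝ} {a : ℝ}
    (hcont : ContinuousWithinAt f (Ici a) a) (hderiv : ∀ x ∈ Ioi a, HasDerivAt f (f' x) x)
    (hint : IntegrableOn f' (Ioi a)) (hlim : Tendsto f atTop (𝓝 0)) :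
    |f a| ≤ ∫ x in Ioi a, |f' x| := by
  rw [← abs_neg, ← zero_sub, ← integral_Ioi_of_hasDerivAt_of_tendsto hcont hderiv hint hlim]
  exact abs_integral_le_integral_abs

theorem abs_le_sqrt_mul_sqrt_mul_rpow_of_monotoneOn {w ψ ψ' : ℝ → ℝ} {a p : ℝ} (hp : p ≤ 1)
    (hw_meas : Measurable w) (ha : 0 < w a) (hw_mono : MonotoneOn w (Ici a))
    (hw_int : IntegrableOn (fun x => w x ^ (-p)) (Ioi a)) (hcont : ContinuousWithinAt ψ (Ici a) a)
    (hderiv : ∀ x ∈ Ioi a, HasDerivAt ψ (ψ' x) x)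
    (hψ'_meas : AEStronglyMeasurable ψ' (volume.restrict (Ioi a)))
    (hlim : Tendsto ψ atTop (𝓝 0)) (hnorm : IntegrableOn (fun x => ψ' x ^ 2 * w x) (Ioi a)) :
    |ψ a| ≤ √(∫ x in Ioi a, w x ^ (-p)) * √(∫ x in Ioi a, ψ' x ^ 2 * w x) *
      w a ^ ((p - 1) / 2) := by
  have hinv_int := integrableOn_inv_of_monotoneOn hp hw_meas ha hw_mono hw_int
  have hw_pos : ∀ᵐ x ∂(volume.restrict (Ioi a)), 0 < w x :=
    ae_restrict_of_forall_mem measurableSet_Ioi fun x hx =>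
      ha.trans_le (hw_mono self_mem_Ici (mem_Ici.2 hx.out.le) hx.out.le)
  have hψ'_int : IntegrableOn ψ' (Ioi a) :=
    integrable_of_integrable_sq_mul_of_integrable_inv hψ'_meas hw_pos hnorm hinv_int
  calc |ψ a| ≤ ∫ x in Ioi a, |ψ' x| := abs_le_setIntegral_abs_deriv_Ioi hcont hderiv hψ'_int hlim
    _ ≤ √(∫ x in Ioi a, ψ' x ^ 2 * w x) * √(∫ x in Ioi a, (w x)⁻¹) :=
        integral_abs_le_sqrt_mul_sqrt_of_weight hψ'_meas hw_meas.aemeasurable hw_pos hnorm hinv_int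
    _ ≤ √(∫ x in Ioi a, ψ' x ^ 2 * w x) * √(w a ^ (p - 1) * ∫ x in Ioi a, w x ^ (-p)) := by
        gcongr
        exact setIntegral_inv_le_of_monotoneOn hp hw_meas ha hw_mono hw_int
    _ = _ := by
        rw [Real.sqrt_mul (Real.rpow_nonneg ha.le _), Real.sqrt_eq_rpow (w a ^ _),
          ← Real.rpow_mul ha.le, mul_one_div]
        ring

theorem abs_le_sqrt_mul_sqrt_mul_rpow_of_le {w ψ ψ' : ℝ → ℝ} {a p : ℝ} (hp : p ≤ 1)
    (hw_meas : Measurable w) (hw_pos : ∀ x ≥ a, 0 < w x) (hw_mono : MonotoneOn w (Ici a))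
    (hw_int : IntegrableOn (fun x => w x ^ (-p)) (Ioi a))
    (hderiv : ∀ x ≥ a, HasDerivWithinAt ψ (ψ' x) (Ici a) x) (hcont : ContinuousOn ψ' (Ici a))
    (hlim : Tendsto ψ atTop (𝓝 0)) (hnorm : IntegrableOn (fun x => ψ' x ^ 2 * w x) (Ioi a))
    {x : ℝ} (hx : a ≤ x) :
    |ψ x| ≤ √(∫ t in Ioi a, w t ^ (-p)) * √(∫ t in Ioi a, ψ' t ^ 2 * w t) *
      w x ^ ((p - 1) / 2) := by
  have hsub : Ioi x ⊆ Ioi a := Ioi_subset_Ioi hx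
  have hwx : 0 < w x := hw_pos x hx
  calc |ψ x| ≤ √(∫ t in Ioi x, w t ^ (-p)) * √(∫ t in Ioi x, ψ' t ^ 2 * w t) *
        w x ^ ((p - 1) / 2) :=
      abs_le_sqrt_mul_sqrt_mul_rpow_of_monotoneOn hp hw_meas hwx
        (hw_mono.mono (Ici_subset_Ici.2 hx)) (hw_int.mono_set hsub)
        ((hderiv x hx).continuousWithinAt.mono (Ici_subset_Ici.2 hx))
        (fun t ht => (hderiv t (hx.trans ht.out.le)).hasDerivAt (Ici_mem_nhds (hx.trans_lt ht.out)))
        ((hcont.mono (hsub.trans Ioi_subset_Ici_self)).aestronglyMeasurable measurableSet_Ioi)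
        hlim (hnorm.mono_set hsub)
    _ ≤ √(∫ t in Ioi a, w t ^ (-p)) * √(∫ t in Ioi a, ψ' t ^ 2 * w t) * w x ^ ((p - 1) / 2) := by
      gcongr
      · exact ae_restrict_of_forall_mem measurableSet_Ioi fun t ht =>
          Real.rpow_nonneg (hw_pos t ht.out.le).le _
      · exact ae_restrict_of_forall_mem measurableSet_Ioi fun t ht =>
          mul_nonneg (sq_nonneg _) (hw_pos t ht.out.le).le

/-- The L¹-bound for the weighted Sobolev space `H_w`: if `w` is a positive
nondecreasing weight with `∫₀^∞ w^{−1/3} < ∞` and `ψ` is continuously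
differentiable on `[0,∞)` with `ψ(∞) = 0` and `∫₀^∞ ψ'² w < ∞`, then
`∫₀^∞ |ψ| ≤ (∫₀^∞ w^{−1/3})^{3/2} (∫₀^∞ ψ'² w)^{1/2}`. -/
theorem weighted_sobolev_L1_bound
    (w : ℝ → ℝ) (hw_meas : Measurable w) (hw_pos : ∀ x ≥ (0:ℝ), 0 < w x)
    (hw_mono : MonotoneOn w (Set.Ici 0))
    (hw_int : IntegrableOn (fun x => w x ^ (-(1/3) : ℝ)) (Set.Ioi 0))
    (ψ ψ' : ℝ → ℝ)
    (hderiv : ∀ x ≥ (0:ℝ), HasDerivWithinAt ψ (ψ' x) (Set.Ici 0) x)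
    (hcont : ContinuousOn ψ' (Set.Ici 0))
    (hlim : Filter.Tendsto ψ Filter.atTop (nhds 0))
    (hnorm : IntegrableOn (fun x => (ψ' x) ^ 2 * w x) (Set.Ioi 0)) :
    IntegrableOn ψ (Set.Ioi 0) ∧
      ∫ x in Set.Ioi 0, |ψ x|
        ≤ (∫ x in Set.Ioi 0, w x ^ (-(1/3) : ℝ)) ^ ((3:ℝ)/2) *
          Real.sqrt (∫ x in Set.Ioi 0, (ψ' x) ^ 2 * w x) := by
  set I := ∫ x in Ioi 0, w x ^ (-(1/3) : ℝ)
  set N := √(∫ x in Ioi 0, ψ' x ^ 2 * w x)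
  have key : ∀ x ∈ Ioi (0 : ℝ), |ψ x| ≤ √I * N * w x ^ (-(1/3) : ℝ) := fun x hx => by
    simpa only [show ((1/3 - 1) / 2 : ℝ) = -(1/3) by norm_num] using
      abs_le_sqrt_mul_sqrt_mul_rpow_of_le (p := 1/3) (by norm_num) hw_meas hw_pos hw_mono hw_int
        hderiv hcont hlim hnorm hx.out.le
  have hψ_cont : ContinuousOn ψ (Ioi 0) := fun x hx =>
    (hderiv x hx.out.le).continuousWithinAt.mono Ioi_subset_Ici_self
  have hψ_int : IntegrableOn ψ (Ioi 0) :=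
    (hw_int.const_mul (√I * N)).mono' (hψ_cont.aestronglyMeasurable measurableSet_Ioi)
      (ae_restrict_of_forall_mem measurableSet_Ioi key)
  have hI : 0 ≤ I := setIntegral_nonneg measurableSet_Ioi fun x hx =>
    Real.rpow_nonneg (hw_pos x hx.out.le).le _
  refine ⟨hψ_int, ?_⟩
  calc ∫ x in Ioi 0, |ψ x| ≤ ∫ x in Ioi 0, √I * N * w x ^ (-(1/3) : ℝ) :=
        setIntegral_mono_on hψ_int.abs (hw_int.const_mul _) measurableSet_Ioi key
    _ = I ^ ((3:ℝ)/2) * N := by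
        rw [integral_const_mul, show ((3:ℝ)/2) = 1/2 + 1 by norm_num,
          Real.rpow_add' hI (by norm_num), Real.rpow_one, ← Real.sqrt_eq_rpow]
        ring
end

section
/- Let d ≥ 1, let φ₁, …, φ_d : [0,∞) → ℝ be linearly independent functions, let γ₁, …, γ_d ∈ ℝ, and let B_{i,jk} (i,j,k ∈ {1,…,d}) be real coefficients such that for all x ≥ 0 and all j,k: Σᵢ (B_{i,jk} + B_{i,kj}) φᵢ(x) = φⱼ(x) γ_k + φ_k(x) γⱼ. Then for every i and every z ∈ ℝ^d: Σ_{j,k} B_{i,jk} z_j z_k = z_i · Σ_k γ_k z_k. -/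
open Finset

/-! Linear independence of the `φᵢ` on `[0, ∞)` lets one compare coefficients in the hypothesis,
so `B i j k + B i k j` equals the symmetrisation of `E i j k := if i = j then γ k else 0`.
A quadratic form only sees the symmetrisation of its coefficients, and `E i` gives the
form `zᵢ Σₖ γₖ zₖ`. -/

theorem LinearIndependent.eq_of_sum_mul_eqOn {ι X R : Type*} [Fintype ι] [CommSemiring R]
    {v : ι → X → R} {s : Set X} (hv : LinearIndependent R fun i => s.domRestrict (v i))
    {c c' : ι → R} (h : ∀ x ∈ s, ∑ i, c i * v i x = ∑ i, c' i * v i x) : c = c' := by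
  refine funext (Fintype.linearIndependent_iffₛ.mp hv c c' ?_)
  ext ⟨x, hx⟩
  simpa only [Finset.sum_apply, Pi.smul_apply, Set.domRestrict_apply, smul_eq_mul] using h x hx

theorem sum_sum_add_swap_mul_mul {ι R : Type*} [Fintype ι] [CommSemiring R]
    (A : ι → ι → R) (z : ι → R) :
    ∑ j, ∑ k, (A j k + A k j) * z j * z k = 2 * ∑ j, ∑ k, A j k * z j * z k := by
  simp only [add_mul, sum_add_distrib]
  rw [sum_comm (f := fun j k => A k j * z j * z k), two_mul]
  congr 1
  exact sum_congr rfl fun j _ => sum_congr rfl fun k _ => by ring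

theorem sum_sum_ite_eq_mul_mul {ι R : Type*} [Fintype ι] [DecidableEq ι] [CommSemiring R]
    (i : ι) (γ z : ι → R) :
    ∑ j, ∑ k, (if i = j then γ k else 0) * z j * z k = z i * ∑ k, γ k * z k := by
  rw [mul_sum, sum_eq_single i (fun j _ hj => by simp [Ne.symm hj]) (by simp)]
  exact sum_congr rfl fun k _ => by rw [if_pos rfl]; ring

theorem sum_ite_eq_add_ite_eq_mul {ι R : Type*} [Fintype ι] [DecidableEq ι] [CommSemiring R]
    (j k : ι) (a b : R) (f : ι → R) :
    ∑ i, ((if i = j then a else 0) + (if i = k then b else 0)) * f i = f j * a + f k * b := by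
  simp only [add_mul, ite_mul, zero_mul, sum_add_distrib, sum_ite_eq', mem_univ, if_true]
  ring

theorem affine_quadratic_drift_form_general
    (d : ℕ) (φ : Fin d → ℝ → ℝ)
    (hli : LinearIndependent ℝ fun i => (Set.Ici (0:ℝ)).restrict (φ i))
    (γ : Fin d → ℝ) (B : Fin d → Fin d → Fin d → ℝ)
    (hB : ∀ x ≥ (0:ℝ), ∀ j k : Fin d,
      ∑ i, (B i j k + B i k j) * φ i x = φ j x * γ k + φ k x * γ j) :
    ∀ (i : Fin d) (z : Fin d → ℝ),
      ∑ j, ∑ k, B i j k * z j * z k = z i * ∑ k, γ k * z k := by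
  set E : Fin d → Fin d → Fin d → ℝ := fun i j k => if i = j then γ k else 0
  have hsymm : ∀ j k, (fun i => B i j k + B i k j) = fun i => E i j k + E i k j := fun j k =>
    hli.eq_of_sum_mul_eqOn fun x hx => by
      rw [hB x hx j k, sum_ite_eq_add_ite_eq_mul]
  intro i z
  have hdouble : 2 * ∑ j, ∑ k, B i j k * z j * z k = 2 * (z i * ∑ k, γ k * z k) := by
    rw [← sum_sum_add_swap_mul_mul, ← sum_sum_ite_eq_mul_mul i γ z, ← sum_sum_add_swap_mul_mul]
    exact sum_congr rfl fun j _ => sum_congr rfl fun k _ => by rw [congrFun (hsymm j k) i]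
  exact mul_left_cancel₀ two_ne_zero hdouble

/-- Matching quadratic coefficients in the affine consistency equation:
if `φ₁,…,φ_d : [0,∞) → ℝ` are linearly independent and
`Σᵢ (B_{i,jk} + B_{i,kj}) φᵢ(x) = φⱼ(x)γₖ + φₖ(x)γⱼ` for all `x ≥ 0` and
all `j,k`, then `Σ_{j,k} B_{i,jk} zⱼ zₖ = zᵢ Σₖ γₖ zₖ` for all `i, z`. -/
theorem affine_quadratic_drift_form
    (d : ℕ) (hd : 1 ≤ d) (φ : Fin d → ℝ → ℝ)
    (hli : LinearIndependent ℝ fun i => (Set.Ici (0:ℝ)).restrict (φ i))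
    (γ : Fin d → ℝ) (B : Fin d → Fin d → Fin d → ℝ)
    (hB : ∀ x ≥ (0:ℝ), ∀ j k : Fin d,
      ∑ i, (B i j k + B i k j) * φ i x = φ j x * γ k + φ k x * γ j) :
    ∀ (i : Fin d) (z : Fin d → ℝ),
      ∑ j, ∑ k, B i j k * z j * z k = z i * ∑ k, γ k * z k :=
  affine_quadratic_drift_form_general d φ hli γ B hB
end

section
/- Let d ≥ 1 and κ, θ, q ∈ ℝ^d. Define v(u) := 1 + Σⱼ uⱼ, drift functions μᵢ(u) := κᵢ uᵢ + θᵢ v(u), and diagonal diffusion functions cᵢᵢ(u) := qᵢ² uᵢ v(u) on [0,∞)^d, and let G : [0,∞)^d → ℝ^d be given by G_i(u) = u_i / v(u). Then there exist b ∈ ℝ^d, β ∈ ℝ^{d×d}, and γ ∈ ℝ^d such that for every u ∈ [0,∞)^d, writing z := G(u), one has for each i: Σⱼ μⱼ(u) ∂G_i/∂uⱼ(u) + (1/2) Σⱼ cⱼⱼ(u) ∂²G_i/∂uⱼ²(u) = bᵢ + Σⱼ βᵢⱼ zⱼ + zᵢ Σⱼ γⱼ zⱼ. -/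
/-!
Along the coordinate line `s ↦ update u j s`, the map `G_i` is a Möbius function
`(a + e s) / (A + s)`, so `∂ⱼGᵢ = (δᵢⱼ - zᵢ) / v` and `∂ⱼ²Gᵢ = -2 (δᵢⱼ - zᵢ) / v²`.
Since `μⱼ = v (θⱼ + κⱼ zⱼ)` and `cⱼⱼ = qⱼ² zⱼ v²`, the powers of `v` cancel and the generator
becomes `∑ⱼ mⱼ (δᵢⱼ - zᵢ) = mᵢ - zᵢ ∑ⱼ mⱼ` with `mⱼ = θⱼ + (κⱼ - qⱼ²) zⱼ`,
which is of the consistent form with `b = θ`, `β = diag (κ - q² - ∑ θ)` and `γ = q² - κ`.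
-/

open Finset Function

theorem hasDerivAt_add_mul_div_add (a e A : ℝ) {x : ℝ} (hx : A + x ≠ 0) :
    HasDerivAt (fun s => (a + e * s) / (A + s)) ((e * A - a) / (A + x) ^ 2) x := by
  have hnum : HasDerivAt (fun s => a + e * s) e x := by
    simpa using ((hasDerivAt_id x).const_mul e).const_add a
  have hden : HasDerivAt (fun s => A + s) 1 x := (hasDerivAt_id x).const_add A
  refine (hnum.fun_div hden hx).congr_deriv ?_
  ring

theorem iteratedDeriv_two_add_mul_div_add (a e A : ℝ) {x : ℝ} (hx : A + x ≠ 0) :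
    iteratedDeriv 2 (fun s => (a + e * s) / (A + s)) x = -2 * (e * A - a) / (A + x) ^ 3 := by
  have hderiv : deriv (fun s => (a + e * s) / (A + s)) =ᶠ[nhds x]
      fun s => (e * A - a) / (A + s) ^ 2 := by
    filter_upwards [(continuousAt_const.add continuousAt_id).eventually_ne hx] with s hs
    exact (hasDerivAt_add_mul_div_add a e A hs).deriv
  have hden : HasDerivAt (fun s => (A + s) ^ 2) (2 * (A + x)) x := by
    simpa using ((hasDerivAt_id x).const_add A).fun_pow 2
  rw [iteratedDeriv_succ, iteratedDeriv_one, hderiv.deriv_eq,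
    ((hasDerivAt_const x (e * A - a)).fun_div hden (pow_ne_zero 2 hx)).deriv]
  field_simp
  ring

section

variable {ι : Type*} [Fintype ι]

noncomputable def toSimplex (u : ι → ℝ) : ι → ℝ := fun i => u i / (1 + ∑ j, u j)

variable [DecidableEq ι]

theorem sum_update_eq_sum_add_sub (u : ι → ℝ) (j : ι) (s : ℝ) :
    ∑ k, update u j s k = ∑ k, u k + (s - u j) := by
  rw [sum_update_of_mem (mem_univ j), ← sum_erase_add _ _ (mem_univ j), sdiff_singleton_eq_erase]
  ring

theorem sum_mul_ite_sub (m z : ι → ℝ) (i : ι) :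
    ∑ j, m j * ((if i = j then 1 else 0) - z i) = m i - z i * ∑ j, m j := by
  simp [mul_sub, sum_sub_distrib, mul_sum, mul_comm]

theorem toSimplex_update_apply (u : ι → ℝ) (i j : ι) :
    (fun s => toSimplex (update u j s) i) = fun s =>
      ((if i = j then 0 else u i) + (if i = j then 1 else 0) * s) / ((1 + ∑ k, u k - u j) + s) := by
  funext s
  rw [toSimplex, sum_update_eq_sum_add_sub, update_apply]
  split_ifs <;> ring_nf

theorem deriv_toSimplex_update {u : ι → ℝ} (hu : 1 + ∑ k, u k ≠ 0) (i j : ι) :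
    deriv (fun s => toSimplex (update u j s) i) (u j)
      = ((if i = j then 1 else 0) - toSimplex u i) / (1 + ∑ k, u k) := by
  rw [toSimplex_update_apply, (hasDerivAt_add_mul_div_add _ _ _ (by simpa using hu)).deriv,
    sub_add_cancel, toSimplex]
  split_ifs with hij
  · subst hij
    field_simp
    ring
  · field_simp
    ring

theorem iteratedDeriv_two_toSimplex_update {u : ι → ℝ} (hu : 1 + ∑ k, u k ≠ 0) (i j : ι) :
    iteratedDeriv 2 (fun s => toSimplex (update u j s) i) (u j)
      = -2 * ((if i = j then 1 else 0) - toSimplex u i) / (1 + ∑ k, u k) ^ 2 := by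
  rw [toSimplex_update_apply, iteratedDeriv_two_add_mul_div_add _ _ _ (by simpa using hu),
    sub_add_cancel, toSimplex]
  split_ifs with hij
  · subst hij
    field_simp
    ring
  · field_simp
    ring

end

theorem simplex_factor_drift_is_consistent_quadratic_general
    (d : ℕ) (κ θ q : Fin d → ℝ)
    (v : (Fin d → ℝ) → ℝ) (hv : ∀ u, v u = 1 + ∑ j, u j)
    (μ : Fin d → (Fin d → ℝ) → ℝ) (hμ : ∀ i u, μ i u = κ i * u i + θ i * v u)
    (c : Fin d → (Fin d → ℝ) → ℝ) (hc : ∀ i u, c i u = q i ^ 2 * u i * v u)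
    (G : (Fin d → ℝ) → Fin d → ℝ) (hG : ∀ u i, G u i = u i / v u) :
    ∃ (b : Fin d → ℝ) (β : Fin d → Fin d → ℝ) (γ : Fin d → ℝ),
      ∀ u : Fin d → ℝ, (∀ j, 0 ≤ u j) → ∀ i : Fin d,
        (∑ j, μ j u * deriv (fun s => G (Function.update u j s) i) (u j))
          + (1 / 2) * ∑ j, c j u *
              iteratedDeriv 2 (fun s => G (Function.update u j s) i) (u j)
        = b i + ∑ j, β i j * G u j + G u i * ∑ j, γ j * G u j := by
  obtain rfl : G = toSimplex := funext fun u => funext fun i => by rw [hG, hv, toSimplex]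
  refine ⟨θ, Matrix.diagonal fun i => κ i - q i ^ 2 - ∑ k, θ k, fun j => q j ^ 2 - κ j, ?_⟩
  intro u hu i
  have hw : 0 < 1 + ∑ k, u k := add_pos_of_pos_of_nonneg one_pos (sum_nonneg fun k _ => hu k)
  simp only [hμ, hc, hv, deriv_toSimplex_update hw.ne', iteratedDeriv_two_toSimplex_update hw.ne']
  calc _ = ∑ j, (θ j + (κ j - q j ^ 2) * toSimplex u j)
          * ((if i = j then 1 else 0) - toSimplex u i) := by
        rw [mul_sum, ← sum_add_distrib]
        refine sum_congr rfl fun j _ => ?_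
        simp only [toSimplex]
        field_simp
        ring
    _ = _ := by
        simp only [sum_mul_ite_sub, Matrix.diagonal_apply, ite_mul, zero_mul, sum_ite_eq,
          mem_univ, if_true, sum_add_distrib, sub_mul, sum_sub_distrib]
        ring

/-- Applying the diffusion generator of `U` (drift `μᵢ(u) = κᵢuᵢ + θᵢv(u)`,
diagonal diffusion `cᵢᵢ(u) = qᵢ²uᵢv(u)`, `v(u) = 1 + Σⱼuⱼ`) to the coordinates
of `G(u)_i = uᵢ/v(u)` yields a quadratic polynomial in `z = G(u)` of the
consistent form `bᵢ + Σⱼ βᵢⱼ zⱼ + zᵢ Σⱼ γⱼ zⱼ`. -/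
theorem simplex_factor_drift_is_consistent_quadratic
    (d : ℕ) (hd : 1 ≤ d) (κ θ q : Fin d → ℝ)
    (v : (Fin d → ℝ) → ℝ) (hv : ∀ u, v u = 1 + ∑ j, u j)
    (μ : Fin d → (Fin d → ℝ) → ℝ) (hμ : ∀ i u, μ i u = κ i * u i + θ i * v u)
    (c : Fin d → (Fin d → ℝ) → ℝ) (hc : ∀ i u, c i u = q i ^ 2 * u i * v u)
    (G : (Fin d → ℝ) → Fin d → ℝ) (hG : ∀ u i, G u i = u i / v u) :
    ∃ (b : Fin d → ℝ) (β : Fin d → Fin d → ℝ) (γ : Fin d → ℝ),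
      ∀ u : Fin d → ℝ, (∀ j, 0 ≤ u j) → ∀ i : Fin d,
        (∑ j, μ j u * deriv (fun s => G (Function.update u j s) i) (u j))
          + (1 / 2) * ∑ j, c j u *
              iteratedDeriv 2 (fun s => G (Function.update u j s) i) (u j)
        = b i + ∑ j, β i j * G u j + G u i * ∑ j, γ j * G u j :=
  simplex_factor_drift_is_consistent_quadratic_general d κ θ q v hv μ hμ c hc G hG
end
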